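/- arXiv:2206.14201 — 2 statements merged into one kernel-verified Lean document; each statement's English description precedes it below -/
import Mathlib

section
/- Let p be prime, n coprime to p, and let C₁ = ⟨f h₁ + pf⟩ and C₂ = ⟨f h₂ + pf⟩ be ideals (cyclic codes) in ℤ_{p²}[x]/(xⁿ-1), where f h₁ g₁ = xⁿ - 1 and f h₂ g₂ = xⁿ - 1 with all factors monic. Then C₁ ∩ C₂ = ⟨f·lcm(h₁,h₂), p·f·gcd(g₁,g₂)⟩. -/
/-!
Reduction modulo `p` makes `xⁿ - 1` separable, so whenever `a b ∣ xⁿ - 1` the factors `a`, `b` are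
coprime mod `p`, and, the kernel of reduction being nilpotent, also over `ℤ_{p²}`. With
`m = h₁ g₁ = h₂ g₂`, `f m = xⁿ - 1` and `p² = 0`, coprimality gives `⟨f hᵢ + p f⟩ = f ⟨hᵢ, p⟩`.
Writing `1 = u h₁ + v g₁` splits any `x ∈ ⟨h₁, p⟩ ∩ ⟨h₂, p⟩` as an element of `⟨h₁⟩ ∩ ⟨h₂⟩ = ⟨L⟩`
plus a multiple of `p`, so the intersection is `f ⟨L, p⟩`. Finally `L D` divides `m`, so `L` and
`D` are coprime and `⟨L, p⟩ = ⟨L, p D⟩`.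
-/

open Polynomial

noncomputable def Qmk (p n : ℕ) :
    Polynomial (ZMod (p ^ 2)) →+*
      Polynomial (ZMod (p ^ 2)) ⧸ Ideal.span {(X : Polynomial (ZMod (p ^ 2))) ^ n - 1} :=
  Ideal.Quotient.mk _

theorem IsCoprime.of_map_of_ker_isNilpotent {A B : Type*} [CommRing A] [CommRing B]
    {φ : A →+* B} (hφ : Function.Surjective φ) (hker : ∀ x, φ x = 0 → IsNilpotent x)
    {a b : A} (h : IsCoprime (φ a) (φ b)) : IsCoprime a b := by
  obtain ⟨u', v', huv⟩ := h
  obtain ⟨u, rfl⟩ := hφ u'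
  obtain ⟨v, rfl⟩ := hφ v'
  have hnil : IsNilpotent (u * a + v * b - 1) := hker _ (by simp [huv])
  obtain ⟨w, hw⟩ := (sub_add_cancel (u * a + v * b) 1 ▸ hnil.isUnit_add_one).exists_left_inv
  exact ⟨w * u, w * v, by linear_combination hw⟩

theorem ZMod.isNilpotent_of_castHom_eq_zero {p k : ℕ} (hk : k ≠ 0) {c : ZMod (p ^ k)}
    (hc : ZMod.castHom (dvd_pow_self p hk) (ZMod p) c = 0) : IsNilpotent c := by
  rw [ZMod.castHom_apply, ← ZMod.intCast_cast, ZMod.intCast_zmod_eq_zero_iff_dvd] at hc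
  obtain ⟨j, hj⟩ := hc
  refine ⟨k, ?_⟩
  rw [← ZMod.intCast_zmod_cast c, hj]
  push_cast
  rw [mul_pow, ← Nat.cast_pow, ZMod.natCast_self, zero_mul]

theorem isCoprime_of_mul_dvd_X_pow_sub_one {p k n : ℕ} (hp : p.Prime) (hk : k ≠ 0)
    (hn : (n : ZMod p) ≠ 0) {a b : (ZMod (p ^ k))[X]} (hab : a * b ∣ X ^ n - 1) :
    IsCoprime a b := by
  have : Fact p.Prime := ⟨hp⟩
  set φ := ZMod.castHom (dvd_pow_self p hk) (ZMod p)
  refine IsCoprime.of_map_of_ker_isNilpotent (φ := mapRingHom φ)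
    (map_surjective _ (ZMod.ringHom_surjective φ)) (fun x hx => ?_) ?_
  · refine Polynomial.isNilpotent_iff.2 fun i => ZMod.isNilpotent_of_castHom_eq_zero hk ?_
    rw [← coeff_map, ← coe_mapRingHom, hx, coeff_zero]
  · apply Separable.isCoprime
    rw [← map_mul]
    refine (X_pow_sub_one_separable_iff.2 hn).of_dvd ?_
    simpa using map_dvd (mapRingHom φ) hab

section

variable {A : Type*} [CommRing A]

open Ideal

theorem span_add_sup_span_mul_of_isCoprime {h g c : A} (hhg : IsCoprime h g) (hc : c * c = 0) :
    span {h + c} ⊔ span {h * g} = span {h} ⊔ span {c} := by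
  obtain ⟨u, v, huv⟩ := hhg
  have hc_mem : c ∈ span {h + c} ⊔ span {h * g} := by
    have hc_eq : c = (c * u + v * g) * (h + c) - v * (h * g) := by
      linear_combination (-c) * huv - u * hc
    have hmem : (c * u + v * g) * (h + c) - v * (h * g) ∈ span {h + c} ⊔ span {h * g} :=
      sub_mem (mem_sup_left (mul_mem_left _ _ (mem_span_singleton_self _)))
        (mem_sup_right (mul_mem_left _ _ (mem_span_singleton_self _)))
    rwa [← hc_eq] at hmem
  apply le_antisymm
  · refine sup_le ?_ ?_ <;> rw [span_singleton_le_iff_mem]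
    · exact add_mem (mem_sup_left (mem_span_singleton_self _))
        (mem_sup_right (mem_span_singleton_self _))
    · exact mem_sup_left (mul_mem_right _ _ (mem_span_singleton_self _))
  · refine sup_le ?_ ?_ <;> rw [span_singleton_le_iff_mem]
    · simpa using sub_mem (mem_sup_left (mem_span_singleton_self (h + c))) hc_mem
    · exact hc_mem

theorem sup_inf_sup_of_isCoprime {h₁ g₁ h₂ : A} (hhg : IsCoprime h₁ g₁) (hdvd : h₂ ∣ h₁ * g₁)
    (I : Ideal A) :
    (span {h₁} ⊔ I) ⊓ (span {h₂} ⊔ I) = span {h₁} ⊓ span {h₂} ⊔ I := by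
  refine le_antisymm ?_
    (sup_le (inf_le_inf le_sup_left le_sup_left) (le_inf le_sup_right le_sup_right))
  rintro x ⟨hx₁, hx₂⟩
  obtain ⟨u, v, huv⟩ := hhg
  obtain ⟨y₁, hy₁, i₁, hi₁, rfl⟩ := Submodule.mem_sup.1 hx₁
  obtain ⟨y₂, hy₂, i₂, hi₂, hx⟩ := Submodule.mem_sup.1 hx₂
  obtain ⟨a, rfl⟩ := mem_span_singleton'.1 hy₁
  obtain ⟨b, rfl⟩ := mem_span_singleton'.1 hy₂
  obtain ⟨e, he⟩ := hdvd
  -- x = u h₁ x + v g₁ x, and modulo I the two terms are multiples of h₁ h₂ and of h₁ g₁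
  have hx_eq : a * h₁ + i₁ =
      (u * b * h₂ * h₁ + v * a * h₁ * g₁) + (u * h₁ * i₂ + v * g₁ * i₁) := by
    linear_combination (-(a * h₁) - i₁) * huv - u * h₁ * hx
  rw [hx_eq]
  refine add_mem (mem_sup_left ⟨?_, ?_⟩)
    (mem_sup_right (add_mem (mul_mem_left _ _ hi₂) (mul_mem_left _ _ hi₁)))
  · exact mem_span_singleton.2 ⟨u * b * h₂ + v * a * g₁, by ring⟩
  · exact mem_span_singleton.2 ⟨u * b * h₁ + v * a * e, by linear_combination v * a * he⟩

theorem span_inf_span_eq_span_of_lcm {h₁ h₂ L : A} (hL₁ : h₁ ∣ L) (hL₂ : h₂ ∣ L)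
    (hLmin : ∀ m : A, h₁ ∣ m → h₂ ∣ m → L ∣ m) :
    span {h₁} ⊓ span {h₂} = span {L} := by
  ext x
  simp only [Submodule.mem_inf, mem_span_singleton]
  exact ⟨fun ⟨h₁x, h₂x⟩ => hLmin x h₁x h₂x, fun hx => ⟨hL₁.trans hx, hL₂.trans hx⟩⟩

theorem span_sup_span_mul_of_isCoprime {L D : A} (hLD : IsCoprime L D) (c : A) :
    span {L} ⊔ span {c * D} = span {L} ⊔ span {c} := by
  obtain ⟨u, v, huv⟩ := hLD
  refine le_antisymm (sup_le_sup_left (span_singleton_le_span_singleton.2 (dvd_mul_right c D)) _)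
    (sup_le le_sup_left ((span_singleton_le_iff_mem _).2 ?_))
  have hc : c = c * u * L + v * (c * D) := by linear_combination (-c) * huv
  have hmem : c * u * L + v * (c * D) ∈ span {L} ⊔ span {c * D} :=
    add_mem (mem_sup_left (mul_mem_left _ _ (mem_span_singleton_self _)))
      (mem_sup_right (mul_mem_left _ _ (mem_span_singleton_self _)))
  rwa [← hc] at hmem

theorem span_singleton_mul_inf_of_isLeftRegular {f : A} (hf : IsLeftRegular f) (I J : Ideal A) :
    span {f} * I ⊓ span {f} * J = span {f} * (I ⊓ J) := by
  refine le_antisymm ?_ (le_inf (mul_mono_right inf_le_left) (mul_mono_right inf_le_right))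
  rintro x ⟨hxI, hxJ⟩
  obtain ⟨y, hy, rfl⟩ := mem_span_singleton_mul.1 hxI
  obtain ⟨z, hz, hzy⟩ := mem_span_singleton_mul.1 hxJ
  exact mem_span_singleton_mul.2 ⟨y, ⟨hy, hf hzy ▸ hz⟩, rfl⟩

theorem span_mul_sup_span_mul (f a b : A) :
    span {f * a} ⊔ span {f * b} = span {f} * (span {a} ⊔ span {b}) := by
  rw [Ideal.mul_sup, span_singleton_mul_span_singleton, span_singleton_mul_span_singleton]

theorem map_mk_inf_map_mk_of_sup_inf_sup {K I₁ I₂ J : Ideal A}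
    (h : (I₁ ⊔ K) ⊓ (I₂ ⊔ K) = J ⊔ K) :
    I₁.map (Ideal.Quotient.mk K) ⊓ I₂.map (Ideal.Quotient.mk K) =
      J.map (Ideal.Quotient.mk K) := by
  apply comap_injective_of_surjective _ Ideal.Quotient.mk_surjective
  simpa only [comap_inf, comap_map_of_surjective' _ Ideal.Quotient.mk_surjective, mk_ker] using h

theorem lcm_mul_dvd_of_dvd_cofactors {h₁ g₁ h₂ g₂ L D : A}
    (hD : IsLeftRegular D) (hm : h₂ * g₂ = h₁ * g₁) (hD₁ : D ∣ g₁) (hD₂ : D ∣ g₂)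
    (hLmin : ∀ m : A, h₁ ∣ m → h₂ ∣ m → L ∣ m) :
    L * D ∣ h₁ * g₁ := by
  obtain ⟨t₁, rfl⟩ := hD₁
  obtain ⟨t₂, rfl⟩ := hD₂
  have ht : h₁ * t₁ = h₂ * t₂ := hD (by linear_combination -hm)
  obtain ⟨w, hw⟩ := hLmin (h₁ * t₁) (dvd_mul_right _ _) ⟨t₂, ht⟩
  exact ⟨w, by linear_combination D * hw⟩

end

theorem intersection_of_codes_general (p n : ℕ) (hp : p.Prime) (hco : Nat.Coprime n p)
    (f h₁ g₁ h₂ g₂ L D : Polynomial (ZMod (p ^ 2)))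
    (hf : f.Monic) (hD : D.Monic)
    (hfac₁ : f * h₁ * g₁ = X ^ n - 1) (hfac₂ : f * h₂ * g₂ = X ^ n - 1)
    (hL₁ : h₁ ∣ L) (hL₂ : h₂ ∣ L)
    (hLmin : ∀ m : Polynomial (ZMod (p ^ 2)), h₁ ∣ m → h₂ ∣ m → L ∣ m)
    (hD₁ : D ∣ g₁) (hD₂ : D ∣ g₂) :
    Ideal.span {Qmk p n (f * h₁ + (p : Polynomial (ZMod (p ^ 2))) * f)}
        ⊓ Ideal.span {Qmk p n (f * h₂ + (p : Polynomial (ZMod (p ^ 2))) * f)}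
      = Ideal.span {Qmk p n (f * L), Qmk p n ((p : Polynomial (ZMod (p ^ 2))) * f * D)} := by
  have hP : (p : (ZMod (p ^ 2))[X]) * p = 0 := by
    rw [← Nat.cast_mul, ← sq, CharP.cast_eq_zero]
  have hn : (n : ZMod p) ≠ 0 := fun h =>
    hp.ne_one (hco.symm.eq_one_of_dvd ((ZMod.natCast_eq_zero_iff n p).1 h))
  have hX : X ^ n - 1 = f * (h₁ * g₁) := by rw [← hfac₁, mul_assoc]
  have hm : h₂ * g₂ = h₁ * g₁ := hf.isRegular.left <|
    show f * (h₂ * g₂) = f * (h₁ * g₁) by rw [← mul_assoc, hfac₂, hX]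
  have hcop : ∀ a b, a * b ∣ h₁ * g₁ → IsCoprime a b := fun a b hab =>
    isCoprime_of_mul_dvd_X_pow_sub_one hp two_ne_zero hn (hab.trans (hX ▸ dvd_mul_left _ _))
  have hLD : L * D ∣ h₁ * g₁ := lcm_mul_dvd_of_dvd_cofactors hD.isRegular.left hm hD₁ hD₂ hLmin
  have hcode : ∀ h g, h * g = h₁ * g₁ →
      Ideal.span {f * h + p * f} ⊔ Ideal.span {X ^ n - 1} =
        Ideal.span {f} * (Ideal.span {h} ⊔ Ideal.span {(p : (ZMod (p ^ 2))[X])}) := by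
    intro h g hhg
    rw [hX, ← hhg, show f * h + p * f = f * (h + p) by ring, span_mul_sup_span_mul,
      span_add_sup_span_mul_of_isCoprime (hcop h g hhg.dvd) hP]
  have key : (Ideal.span {f * h₁ + p * f} ⊔ Ideal.span {X ^ n - 1}) ⊓
      (Ideal.span {f * h₂ + p * f} ⊔ Ideal.span {X ^ n - 1}) =
        Ideal.span {f * L, p * f * D} ⊔ Ideal.span {X ^ n - 1} := by
    rw [hcode h₁ g₁ rfl, hcode h₂ g₂ hm,
      span_singleton_mul_inf_of_isLeftRegular hf.isRegular.left,
      sup_inf_sup_of_isCoprime (hcop h₁ g₁ dvd_rfl) ⟨g₂, hm.symm⟩,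
      span_inf_span_eq_span_of_lcm hL₁ hL₂ hLmin, Ideal.span_insert, hX,
      sup_eq_left.2 (le_sup_of_le_left (Ideal.span_singleton_le_span_singleton.2
        (mul_dvd_mul_left f ((dvd_mul_right L D).trans hLD)))),
      show p * f * D = f * (p * D) by ring, span_mul_sup_span_mul,
      span_sup_span_mul_of_isCoprime (hcop L D hLD)]
  unfold Qmk
  simpa only [Ideal.map_span, Set.image_singleton, Set.image_pair] using
    map_mk_inf_map_mk_of_sup_inf_sup key

/-- `⟨fh₁ + pf⟩ ∩ ⟨fh₂ + pf⟩ = ⟨f·lcm(h₁,h₂), p·f·gcd(g₁,g₂)⟩` in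
`ℤ_{p²}[x]/(xⁿ-1)`, where `L` is the (monic) lcm of `h₁, h₂` and `D` the (monic)
gcd of `g₁, g₂` among divisors of `xⁿ-1`. -/
theorem intersection_of_codes (p n : ℕ) (hp : p.Prime) (hn : 0 < n) (hco : Nat.Coprime n p)
    (f h₁ g₁ h₂ g₂ L D : Polynomial (ZMod (p ^ 2)))
    (hf : f.Monic) (hh₁ : h₁.Monic) (hg₁ : g₁.Monic) (hh₂ : h₂.Monic) (hg₂ : g₂.Monic)
    (hL : L.Monic) (hD : D.Monic)
    (hfac₁ : f * h₁ * g₁ = X ^ n - 1) (hfac₂ : f * h₂ * g₂ = X ^ n - 1)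
    (hL₁ : h₁ ∣ L) (hL₂ : h₂ ∣ L)
    (hLmin : ∀ m : Polynomial (ZMod (p ^ 2)), h₁ ∣ m → h₂ ∣ m → L ∣ m)
    (hD₁ : D ∣ g₁) (hD₂ : D ∣ g₂)
    (hDmax : ∀ e : Polynomial (ZMod (p ^ 2)), e ∣ g₁ → e ∣ g₂ → e ∣ D) :
    Ideal.span {Qmk p n (f * h₁ + (p : Polynomial (ZMod (p ^ 2))) * f)}
        ⊓ Ideal.span {Qmk p n (f * h₂ + (p : Polynomial (ZMod (p ^ 2))) * f)}
      = Ideal.span {Qmk p n (f * L), Qmk p n ((p : Polynomial (ZMod (p ^ 2))) * f * D)} :=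
  intersection_of_codes_general p n hp hco f h₁ g₁ h₂ g₂ L D hf hD hfac₁ hfac₂ hL₁ hL₂ hLmin hD₁ hD₂
end

section
/- Let p be an odd prime and 𝒞 ≤ ℤ_p^α × ℤ_{p²}^β a ℤ_p ℤ_{p²}-additive cyclic code. Define ℛ(𝒞) = { v ∈ ℤ_p^α × ℤ_{p²}^β : Φ(v) ∈ span_{ℤ_p}(Φ(𝒞)) }. Then ℛ(𝒞) is the subgroup generated by 𝒞 together with { p·P(w₁,w₂) : w₁, w₂ ∈ 𝒞 }, and ℛ(𝒞) is closed under the simultaneous cyclic shift π; i.e., ℛ(𝒞) is a ℤ_p ℤ_{p²}-additive cyclic code. -/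
/-- The Gray map `φ : ℤ_{p²} → ℤ_p^p`, sending `θ = θ₀·p + θ₁` (with digits
`0 ≤ θ₀, θ₁ < p`) to the vector whose `i`-th coordinate is `θ₀ + θ₁·i`. -/
def gray (p : ℕ) (θ : ZMod (p ^ 2)) : Fin p → ZMod p :=
  fun i => ((θ.val / p : ℕ) : ZMod p) + ((θ.val % p : ℕ) : ZMod p) * (i.val : ZMod p)

/-- The carry function `P : ℤ_{p²} × ℤ_{p²} → {0,1}`: writing `u = a + p·c`,
`v = b + p·d` with digits in `{0,…,p-1}`, `P(u,v) = 1` iff `a + b ≥ p`. -/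
def carry (p : ℕ) (u v : ZMod (p ^ 2)) : ℕ :=
  if p ≤ u.val % p + v.val % p then 1 else 0

/-- The ambient group `ℤ_p^α × ℤ_{p²}^β` of a `ℤ_p ℤ_{p²}`-additive code. -/
abbrev Amb (p α β : ℕ) := (Fin α → ZMod p) × (Fin β → ZMod (p ^ 2))

/-- The vector `p·P(u,v) = (0, (p·P(u₂ⱼ, v₂ⱼ))ⱼ)` of carries. -/
def carryVec {p α β : ℕ} (u v : Amb p α β) : Amb p α β :=
  (0, fun j => ((p * carry p (u.2 j) (v.2 j) : ℕ) : ZMod (p ^ 2)))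

/-- The carry vector on the `ℤ_{p²}`-block alone: `(p·P(uⱼ, vⱼ))ⱼ`. -/
def carryY {p β : ℕ} (u v : Fin β → ZMod (p ^ 2)) : Fin β → ZMod (p ^ 2) :=
  fun j => ((p * carry p (u j) (v j) : ℕ) : ZMod (p ^ 2))

/-- Cyclic shift `(u₀,…,u_{n-1}) ↦ (u_{n-1}, u₀, …, u_{n-2})`, i.e. `(π u)ᵢ = u_{i-1}`. -/
def cshift {n : ℕ} {M : Type*} (u : Fin n → M) : Fin n → M :=
  fun i => u ((finRotate n).symm i)

/-- Inverse cyclic shift, `(π⁻¹ u)ᵢ = u_{i+1}`. -/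
def cshiftInv {n : ℕ} {M : Type*} (u : Fin n → M) : Fin n → M :=
  fun i => u (finRotate n i)

/-- The simultaneous cyclic shift `π` on `ℤ_p^α × ℤ_{p²}^β`. -/
def shiftAmb {p α β : ℕ} (u : Amb p α β) : Amb p α β :=
  (cshift u.1, cshift u.2)

/-- The inverse simultaneous cyclic shift `π⁻¹`. -/
def shiftAmbInv {p α β : ℕ} (u : Amb p α β) : Amb p α β :=
  (cshiftInv u.1, cshiftInv u.2)

/-- The extended Gray map `Φ : ℤ_p^α × ℤ_{p²}^β → ℤ_p^{α+pβ}` (identity on the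
first block, coordinatewise Gray map `φ` on the second block). -/
def grayExt {p α β : ℕ} (u : Amb p α β) : (Fin α ⊕ Fin β × Fin p) → ZMod p :=
  Sum.elim u.1 (fun x => gray p (u.2 x.1) x.2)

/-!
Φ is injective and additive up to carries, `Φ(u + v) = Φ u + Φ v + Φ(p·P(u, v))`, and it is
additive on translates by vectors whose `ℤ_{p²}`-block is divisible by `p`. Since the carry
vector `p·P(u, v)` depends only on the residues of `u₂, v₂` modulo `p`, every carry vector of two
elements of `D = ⟨𝒞, p·P(𝒞, 𝒞)⟩` is already a carry vector of two codewords. Hence `Φ(D)` lies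
in the span of `Φ(𝒞)`, and `Φ(d) + Φ(d') = Φ(d + d' - p·P(d, d'))` makes `Φ(D)` an additive
subgroup, hence a `ℤ_p`-subspace, so `Φ(D) = span Φ(𝒞)`. Injectivity of Φ gives `ℛ(𝒞) = D`,
and `D` is shift-invariant because `π` commutes with `p·P`.
-/

section Gray

variable {p : ℕ}

lemma gray_apply (θ : ZMod (p ^ 2)) (i : Fin p) :
    gray p θ i = ((θ.val / p : ℕ) : ZMod p) + (θ.val : ZMod p) * (i.val : ZMod p) := by
  rw [gray, ZMod.natCast_mod]

lemma carry_lt [NeZero p] (a b : ZMod (p ^ 2)) : carry p a b < p := by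
  have ha := Nat.mod_lt a.val (NeZero.pos p)
  have hb := Nat.mod_lt b.val (NeZero.pos p)
  unfold carry
  split_ifs <;> omega

lemma carry_eq_div [NeZero p] (a b : ZMod (p ^ 2)) :
    carry p a b = (a.val % p + b.val % p) / p := by
  have ha := Nat.mod_lt a.val (NeZero.pos p)
  have hb := Nat.mod_lt b.val (NeZero.pos p)
  unfold carry
  split_ifs with h
  · rw [← Nat.sub_add_cancel h, Nat.add_div_right _ (NeZero.pos p), Nat.div_eq_of_lt (by omega)]
  · exact (Nat.div_eq_of_lt (by omega)).symm

lemma carry_zero_right [NeZero p] (a : ZMod (p ^ 2)) : carry p a 0 = 0 := by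
  simp [carry, Nat.mod_lt a.val (NeZero.pos p)]

lemma gray_natCast_mul {c : ℕ} (hc : c < p) (i : Fin p) :
    gray p ((p * c : ℕ) : ZMod (p ^ 2)) i = c := by
  have hp : 0 < p := by omega
  have hval : ((p * c : ℕ) : ZMod (p ^ 2)).val = p * c :=
    ZMod.val_natCast_of_lt (by rw [sq]; exact Nat.mul_lt_mul_of_pos_left hc hp)
  rw [gray_apply, hval, Nat.mul_div_cancel_left _ hp]
  simp

lemma gray_add [NeZero p] (a b : ZMod (p ^ 2)) (i : Fin p) :
    gray p (a + b) i = gray p a i + gray p b i + carry p a b := by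
  have hdigits : a.val + b.val = (a.val % p + b.val % p) + p * (a.val / p + b.val / p) := by
    have := Nat.mod_add_div a.val p
    have := Nat.mod_add_div b.val p
    rw [Nat.mul_add]
    omega
  have hhigh : (((a.val + b.val) % p ^ 2 / p : ℕ) : ZMod p)
      = ((carry p a b + (a.val / p + b.val / p) : ℕ) : ZMod p) := by
    have hsq (n : ℕ) : n % p ^ 2 / p = n / p % p := by
      rw [sq, Nat.mod_mul_right_div_self]
    rw [hsq, ZMod.natCast_mod, hdigits,
      Nat.add_mul_div_left _ _ (NeZero.pos p), carry_eq_div]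
  have hlow : (((a.val + b.val) % p ^ 2 : ℕ) : ZMod p) = ((a.val + b.val : ℕ) : ZMod p) := by
    rw [ZMod.natCast_eq_natCast_iff', Nat.mod_mod_of_dvd _ (dvd_pow_self p two_ne_zero)]
  rw [gray_apply, gray_apply, gray_apply, ZMod.val_add, hlow, hhigh]
  push_cast
  ring

lemma gray_injective (hp : 1 < p) : Function.Injective (gray p) := by
  have : NeZero p := ⟨by omega⟩
  intro a b h
  have h0 := congrFun h ⟨0, by omega⟩
  have h1 := congrFun h ⟨1, hp⟩
  simp only [gray_apply, Nat.cast_zero, Nat.cast_one, mul_zero, add_zero, mul_one] at h0 h1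
  rw [h0, add_right_inj, ZMod.natCast_eq_natCast_iff'] at h1
  have hhigh (θ : ZMod (p ^ 2)) : θ.val / p < p :=
    Nat.div_lt_of_lt_mul (by rw [← sq]; exact ZMod.val_lt θ)
  rw [ZMod.natCast_eq_natCast_iff', Nat.mod_eq_of_lt (hhigh a), Nat.mod_eq_of_lt (hhigh b)] at h0
  apply ZMod.val_injective
  rw [← Nat.mod_add_div a.val p, ← Nat.mod_add_div b.val p, h0, h1]

end Gray

section GrayExt

variable {p α β : ℕ}

def reduceMod (p α β : ℕ) : Amb p α β →+ (Fin β → ZMod p) :=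
  ((ZMod.castHom (dvd_pow_self p two_ne_zero) (ZMod p)).toAddMonoidHom.compLeft (Fin β)).comp
    (AddMonoidHom.snd _ _)

lemma reduceMod_apply (u : Amb p α β) (j : Fin β) :
    reduceMod p α β u j = ZMod.cast (u.2 j) := rfl

lemma carryVec_mem_ker_reduceMod (u v : Amb p α β) : carryVec u v ∈ (reduceMod p α β).ker := by
  ext j
  simp [reduceMod_apply, carryVec]

lemma carryVec_eq_of_reduceMod_eq [NeZero p] {u u' v v' : Amb p α β}
    (hu : reduceMod p α β u = reduceMod p α β u') (hv : reduceMod p α β v = reduceMod p α β v') :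
    carryVec u v = carryVec u' v' := by
  have hdigit {w w' : Amb p α β} (h : reduceMod p α β w = reduceMod p α β w') (j : Fin β) :
      (w.2 j).val % p = (w'.2 j).val % p := by
    have h := congrArg ZMod.val (congrFun h j)
    rwa [reduceMod_apply, reduceMod_apply, ZMod.cast_eq_val, ZMod.cast_eq_val, ZMod.val_natCast,
      ZMod.val_natCast] at h
  simp only [carryVec, carry, hdigit hu, hdigit hv]

lemma carryVec_eq_zero_of_mem_ker [NeZero p] (u : Amb p α β) {z : Amb p α β}
    (hz : z ∈ (reduceMod p α β).ker) : carryVec u z = 0 := by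
  rw [carryVec_eq_of_reduceMod_eq rfl (hz.trans (map_zero _).symm)]
  ext j
  · rfl
  · simp [carryVec, carry_zero_right]

lemma grayExt_zero : grayExt (0 : Amb p α β) = 0 := by
  funext x
  rcases x with a | ⟨j, i⟩ <;> simp [grayExt, gray]

lemma grayExt_injective (hp : 1 < p) : Function.Injective (grayExt : Amb p α β → _) := by
  intro u v h
  refine Prod.ext (funext fun a => congrFun h (.inl a)) (funext fun j => gray_injective hp ?_)
  exact funext fun i => congrFun h (.inr (j, i))

lemma grayExt_add [NeZero p] (u v : Amb p α β) :
    grayExt (u + v) = grayExt u + grayExt v + grayExt (carryVec u v) := by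
  funext x
  rcases x with a | ⟨j, i⟩
  · simp [grayExt, carryVec]
  · simp only [grayExt, carryVec, Sum.elim_inr, Pi.add_apply, Prod.snd_add, gray_add,
      gray_natCast_mul (carry_lt _ _)]

lemma grayExt_add_of_mem_ker [NeZero p] (u : Amb p α β) {z : Amb p α β}
    (hz : z ∈ (reduceMod p α β).ker) : grayExt (u + z) = grayExt u + grayExt z := by
  rw [grayExt_add, carryVec_eq_zero_of_mem_ker u hz, grayExt_zero, add_zero]

lemma grayExt_add_sub_carryVec [NeZero p] (u v : Amb p α β) :
    grayExt (u + v - carryVec u v) = grayExt u + grayExt v := by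
  have h := grayExt_add_of_mem_ker (u + v - carryVec u v) (carryVec_mem_ker_reduceMod u v)
  rw [sub_add_cancel, grayExt_add] at h
  exact (add_right_cancel h).symm

lemma grayExt_neg_add_carryVec [NeZero p] (u : Amb p α β) :
    grayExt (-u + carryVec u (-u)) = -grayExt u := by
  have h := grayExt_add u (-u)
  rw [add_neg_cancel, grayExt_zero] at h
  rw [grayExt_add_of_mem_ker _ (carryVec_mem_ker_reduceMod u (-u))]
  linear_combination -h

end GrayExt

section CarryClosure

variable {p α β : ℕ}

def carryClosure (C : AddSubgroup (Amb p α β)) : AddSubgroup (Amb p α β) :=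
  AddSubgroup.closure ((C : Set (Amb p α β)) ∪ {x | ∃ w₁ ∈ C, ∃ w₂ ∈ C, x = carryVec w₁ w₂})

lemma carryClosure_le_sup_ker (C : AddSubgroup (Amb p α β)) :
    carryClosure C ≤ C ⊔ (reduceMod p α β).ker := by
  refine (AddSubgroup.closure_le _).2
    (Set.union_subset (fun c hc => AddSubgroup.mem_sup_left hc) ?_)
  rintro _ ⟨w₁, -, w₂, -, rfl⟩
  exact AddSubgroup.mem_sup_right (carryVec_mem_ker_reduceMod w₁ w₂)

section

variable {C : AddSubgroup (Amb p α β)}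

lemma exists_carryVec_eq [NeZero p] {d d' : Amb p α β} (hd : d ∈ carryClosure C)
    (hd' : d' ∈ carryClosure C) : ∃ c ∈ C, ∃ c' ∈ C, carryVec d d' = carryVec c c' := by
  obtain ⟨c, hc, z, hz, rfl⟩ := AddSubgroup.mem_sup.1 (carryClosure_le_sup_ker C hd)
  obtain ⟨c', hc', z', hz', rfl⟩ := AddSubgroup.mem_sup.1 (carryClosure_le_sup_ker C hd')
  refine ⟨c, hc, c', hc', carryVec_eq_of_reduceMod_eq ?_ ?_⟩
  · rw [map_add, AddMonoidHom.mem_ker.1 hz, add_zero]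
  · rw [map_add, AddMonoidHom.mem_ker.1 hz', add_zero]

lemma carryVec_mem_carryClosure [NeZero p] {d d' : Amb p α β} (hd : d ∈ carryClosure C)
    (hd' : d' ∈ carryClosure C) : carryVec d d' ∈ carryClosure C := by
  obtain ⟨c, hc, c', hc', h⟩ := exists_carryVec_eq hd hd'
  exact AddSubgroup.subset_closure (Or.inr ⟨c, hc, c', hc', h⟩)

lemma grayExt_carryVec_mem_span [NeZero p] {d d' : Amb p α β} (hd : d ∈ carryClosure C)
    (hd' : d' ∈ carryClosure C) :
    grayExt (carryVec d d') ∈ Submodule.span (ZMod p) (grayExt '' (C : Set (Amb p α β))) := by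
  obtain ⟨c, hc, c', hc', h⟩ := exists_carryVec_eq hd hd'
  have hsum : grayExt (carryVec c c') = grayExt (c + c') - grayExt c - grayExt c' := by
    linear_combination -grayExt_add c c'
  rw [h, hsum]
  exact sub_mem (sub_mem (Submodule.subset_span ⟨c + c', add_mem hc hc', rfl⟩)
    (Submodule.subset_span ⟨c, hc, rfl⟩)) (Submodule.subset_span ⟨c', hc', rfl⟩)

lemma grayExt_mem_span_of_mem_carryClosure [NeZero p] {d : Amb p α β} (hd : d ∈ carryClosure C) :
    grayExt d ∈ Submodule.span (ZMod p) (grayExt '' (C : Set (Amb p α β))) := by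
  induction hd using AddSubgroup.closure_induction with
  | mem x hx =>
    rcases hx with hx | ⟨w₁, h₁, w₂, h₂, rfl⟩
    · exact Submodule.subset_span ⟨x, hx, rfl⟩
    · exact grayExt_carryVec_mem_span (AddSubgroup.subset_closure (Or.inl h₁))
        (AddSubgroup.subset_closure (Or.inl h₂))
  | zero => rw [grayExt_zero]; exact zero_mem _
  | add x y hx hy ihx ihy =>
    rw [grayExt_add]
    exact add_mem (add_mem ihx ihy) (grayExt_carryVec_mem_span hx hy)
  | neg x hx ihx =>
    have h := grayExt_add x (-x)
    rw [add_neg_cancel, grayExt_zero] at h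
    have hneg : grayExt (-x) = -grayExt x - grayExt (carryVec x (-x)) := by
      linear_combination -h
    rw [hneg]
    exact sub_mem (neg_mem ihx) (grayExt_carryVec_mem_span hx (neg_mem hx))

lemma shiftAmb_mem_carryClosure (hcyc : ∀ u ∈ C, shiftAmb u ∈ C) {d : Amb p α β}
    (hd : d ∈ carryClosure C) : shiftAmb d ∈ carryClosure C := by
  let π : Amb p α β →+ Amb p α β :=
    { toFun := shiftAmb, map_zero' := rfl, map_add' := fun _ _ => rfl }
  suffices carryClosure C ≤ (carryClosure C).comap π from this hd
  refine (AddSubgroup.closure_le _).2 (Set.union_subset ?_ ?_)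
  · exact fun c hc => AddSubgroup.subset_closure (Or.inl (hcyc c hc))
  · rintro _ ⟨w₁, h₁, w₂, h₂, rfl⟩
    exact AddSubgroup.subset_closure (Or.inr ⟨_, hcyc w₁ h₁, _, hcyc w₂ h₂, rfl⟩)

end

def grayExtImage [NeZero p] (C : AddSubgroup (Amb p α β)) :
    AddSubgroup (Fin α ⊕ Fin β × Fin p → ZMod p) where
  carrier := grayExt '' (carryClosure C : Set (Amb p α β))
  zero_mem' := ⟨0, zero_mem _, grayExt_zero⟩
  add_mem' := by
    rintro _ _ ⟨d, hd, rfl⟩ ⟨d', hd', rfl⟩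
    exact ⟨_, sub_mem (add_mem hd hd') (carryVec_mem_carryClosure hd hd'),
      grayExt_add_sub_carryVec d d'⟩
  neg_mem' := by
    rintro _ ⟨d, hd, rfl⟩
    exact ⟨_, add_mem (neg_mem hd) (carryVec_mem_carryClosure hd (neg_mem hd)),
      grayExt_neg_add_carryVec d⟩

lemma grayExt_image_carryClosure [NeZero p] (C : AddSubgroup (Amb p α β)) :
    grayExt '' (carryClosure C : Set (Amb p α β))
      = Submodule.span (ZMod p) (grayExt '' (C : Set (Amb p α β))) := by
  refine subset_antisymm ?_ ?_
  · rintro _ ⟨d, hd, rfl⟩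
    exact grayExt_mem_span_of_mem_carryClosure hd
  · have hspan : Submodule.span (ZMod p) (grayExt '' (C : Set (Amb p α β)))
        ≤ AddSubgroup.toZModSubmodule p (grayExtImage C) :=
      Submodule.span_le.2 (Set.image_mono fun c hc => AddSubgroup.subset_closure (Or.inl hc))
    exact hspan

lemma grayExt_preimage_span (hp : 1 < p) (C : AddSubgroup (Amb p α β)) :
    grayExt ⁻¹' (Submodule.span (ZMod p) (grayExt '' (C : Set (Amb p α β))) : Set _)
      = (carryClosure C : Set (Amb p α β)) := by
  have : NeZero p := ⟨by omega⟩
  rw [← grayExt_image_carryClosure, Set.preimage_image_eq _ (grayExt_injective hp)]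

end CarryClosure

theorem span_preimage_cyclic_general (p α β : ℕ) (hp : p.Prime)
    (C : AddSubgroup (Amb p α β)) (hcyc : ∀ u ∈ C, shiftAmb u ∈ C) :
    {v : Amb p α β | grayExt v ∈ Submodule.span (ZMod p) (grayExt '' (C : Set (Amb p α β)))}
      = ↑(AddSubgroup.closure ((C : Set (Amb p α β)) ∪
          {x : Amb p α β | ∃ w₁ ∈ C, ∃ w₂ ∈ C, x = carryVec w₁ w₂})) ∧
    ∀ u : Amb p α β,
      grayExt u ∈ Submodule.span (ZMod p) (grayExt '' (C : Set (Amb p α β))) →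
      grayExt (shiftAmb u) ∈ Submodule.span (ZMod p) (grayExt '' (C : Set (Amb p α β))) := by
  have hR := grayExt_preimage_span hp.one_lt C
  refine ⟨hR, fun u hu => ?_⟩
  have hmem (v : Amb p α β) := Set.ext_iff.1 hR v
  exact (hmem _).2 (shiftAmb_mem_carryClosure hcyc ((hmem u).1 hu))

/-- `ℛ(𝒞) = { v : Φ(v) ∈ span Φ(𝒞) }` equals the subgroup generated
by `𝒞` and the carry vectors, and `ℛ(𝒞)` is closed under the cyclic shift `π`. -/
theorem span_preimage_cyclic (p α β : ℕ) (hp : p.Prime) (hodd : Odd p)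
    (C : AddSubgroup (Amb p α β)) (hcyc : ∀ u ∈ C, shiftAmb u ∈ C) :
    {v : Amb p α β | grayExt v ∈ Submodule.span (ZMod p) (grayExt '' (C : Set (Amb p α β)))}
      = ↑(AddSubgroup.closure ((C : Set (Amb p α β)) ∪
          {x : Amb p α β | ∃ w₁ ∈ C, ∃ w₂ ∈ C, x = carryVec w₁ w₂})) ∧
    ∀ u : Amb p α β,
      grayExt u ∈ Submodule.span (ZMod p) (grayExt '' (C : Set (Amb p α β))) →
      grayExt (shiftAmb u) ∈ Submodule.span (ZMod p) (grayExt '' (C : Set (Amb p α β))) :=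
  span_preimage_cyclic_general p α β hp C hcyc
end
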